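/- arXiv:1812.09042 — 3 statements merged into one kernel-verified Lean document; each statement's English description precedes it below -/
import Mathlib

section
/- (Eckart–Young–Mirsky for the Frobenius norm) Let A be an n×m real matrix with singular values σ₁ ≥ σ₂ ≥ … ≥ σ_{min(n,m)} and SVD A = U Σ Vᵀ. For any k, the matrix A_k obtained by truncating the SVD to its k largest singular values satisfies ‖A − A_k‖_F² = Σ_{i>k} σᵢ², and for every matrix B of rank at most k, ‖A − B‖_F ≥ ‖A − A_k‖_F. -/
open Matrix

noncomputable section

/-- `Xd` is the Moore–Penrose pseudoinverse of `X` (the four Penrose conditions). -/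
def IsMoorePenrose {n m : ℕ} (X : Matrix (Fin n) (Fin m) ℝ)
    (Xd : Matrix (Fin m) (Fin n) ℝ) : Prop :=
  X * Xd * X = X ∧ Xd * X * Xd = Xd ∧ (X * Xd)ᵀ = X * Xd ∧ (Xd * X)ᵀ = Xd * X

/-- Squared Frobenius norm. -/
def frobSq {n m : ℕ} (A : Matrix (Fin n) (Fin m) ℝ) : ℝ := ∑ i, ∑ j, (A i j) ^ 2

/-- Frobenius norm. -/
def frob {n m : ℕ} (A : Matrix (Fin n) (Fin m) ℝ) : ℝ := Real.sqrt (frobSq A)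

/-- Rectangular diagonal matrix with entries `σ 0, σ 1, …` on the diagonal. -/
def rdiag (n m : ℕ) (σ : ℕ → ℝ) : Matrix (Fin n) (Fin m) ℝ :=
  Matrix.of fun i j => if (i : ℕ) = (j : ℕ) then σ (i : ℕ) else 0

/-- Rectangular diagonal matrix truncated to its first `k` diagonal entries. -/
def rdiagTrunc (n m k : ℕ) (σ : ℕ → ℝ) : Matrix (Fin n) (Fin m) ℝ :=
  Matrix.of fun i j => if (i : ℕ) = (j : ℕ) ∧ (i : ℕ) < k then σ (i : ℕ) else 0

/-- Diagonal projector onto the first `k` coordinates. -/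
def dproj (n k : ℕ) : Matrix (Fin n) (Fin n) ℝ :=
  Matrix.of fun i j => if i = j ∧ (i : ℕ) < k then (1 : ℝ) else 0

/-- `A = U * rdiag σ * Vᵀ` is a singular value decomposition of `A`:
`U`, `V` are orthogonal and the singular values `σ` are nonnegative and nonincreasing. -/
def IsSVDecomp {n m : ℕ} (A : Matrix (Fin n) (Fin m) ℝ) (U : Matrix (Fin n) (Fin n) ℝ)
    (V : Matrix (Fin m) (Fin m) ℝ) (σ : ℕ → ℝ) : Prop :=
  U * Uᵀ = 1 ∧ Uᵀ * U = 1 ∧ V * Vᵀ = 1 ∧ Vᵀ * V = 1 ∧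
  (∀ i, 0 ≤ σ i) ∧ (∀ i j, i ≤ j → σ j ≤ σ i) ∧ (∀ i, min n m ≤ i → σ i = 0) ∧
  A = U * rdiag n m σ * Vᵀ

/-!
Orthogonal factors do not change the Frobenius norm, so both claims reduce to `Σ = rdiag σ`, where
the first is a direct computation. For the lower bound let `W` be the column space of `B`
(`dim W ≤ k`) and `w j = ‖P_W e_j‖²`; then `0 ≤ w j ≤ 1` and `∑ j, w j = dim W ≤ k`, being the trace
of `P_W`. Column `j` of `Σ - B` is `σ j • e_j - b_j` with `b_j ∈ W`, so its squared norm is at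
least `σ j ^ 2 * ‖P_{Wᗮ} e_j‖² = σ j ^ 2 * (1 - w j)`. As `σ j ^ 2` is nonincreasing, weights
`1 - w j ∈ [0, 1]` whose total deficit is at most `k` leave at least `∑_{j ≥ k} σ j ^ 2`.
-/

open Finset
open scoped InnerProductSpace

lemma sum_Ico_le_sum_mul_one_sub {a w : ℕ → ℝ} {k N : ℕ} (ha : Antitone a) (hak : 0 ≤ a k)
    (hw0 : ∀ j, 0 ≤ w j) (hw1 : ∀ j, w j ≤ 1) (hw : ∑ j ∈ range N, w j ≤ k) :
    ∑ j ∈ Ico k N, a j ≤ ∑ j ∈ range N, a j * (1 - w j) := by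
  have hfirst : ∑ j ∈ range N, w j ≤ ∑ j ∈ range N, if j < k then (1 : ℝ) else 0 := by
    have hN : ∑ j ∈ range N, w j ≤ N := by
      simpa using sum_le_sum fun j (_ : j ∈ range N) => hw1 j
    have hcount : {j ∈ range N | j < k} = range (min k N) := by
      ext; simp only [mem_filter, mem_range, lt_inf_iff]; omega
    rw [sum_boole, hcount, card_range, Nat.cast_min]
    exact le_min hw hN
  -- compare every term with `a k`, which is `≤ a j` for `j < k` and `≥ a j` for `k ≤ j`
  have hpoint : ∀ j, (if k ≤ j then a j else 0) + a k * ((if j < k then 1 else 0) - w j)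
      ≤ a j * (1 - w j) := by
    intro j
    rcases lt_or_ge j k with hjk | hkj
    · simp only [if_neg hjk.not_ge, if_pos hjk]
      nlinarith [ha hjk.le, hw1 j]
    · simp only [if_pos hkj, if_neg hkj.not_gt]
      nlinarith [ha hkj, hw0 j]
  calc ∑ j ∈ Ico k N, a j = ∑ j ∈ range N, if k ≤ j then a j else 0 := by
        rw [← sum_filter]; congr 1; ext; simp only [mem_Ico, mem_filter, mem_range]; omega
    _ ≤ ∑ j ∈ range N, ((if k ≤ j then a j else 0) + a k * ((if j < k then 1 else 0) - w j)) := by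
        rw [sum_add_distrib, ← mul_sum, sum_sub_distrib]
        exact le_add_of_nonneg_right (mul_nonneg hak (sub_nonneg.2 hfirst))
    _ ≤ ∑ j ∈ range N, a j * (1 - w j) := sum_le_sum fun j _ => hpoint j

theorem OrthonormalBasis.sum_norm_sq_starProjection {𝕜 E ι : Type*} [RCLike 𝕜]
    [NormedAddCommGroup E] [InnerProductSpace 𝕜 E] [Fintype ι] (b : OrthonormalBasis ι 𝕜 E)
    (K : Submodule 𝕜 E) [FiniteDimensional 𝕜 K] :
    ∑ i, ‖K.starProjection (b i)‖ ^ 2 = Module.finrank 𝕜 K := by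
  let c := stdOrthonormalBasis 𝕜 K
  have hproj : ∀ x : E, ‖K.starProjection x‖ ^ 2 = ∑ t, ‖⟪(c t : E), x⟫_𝕜‖ ^ 2 := by
    intro x
    rw [K.starProjection_apply, Submodule.norm_coe, ← c.sum_sq_norm_inner_right]
    simp only [K.inner_orthogonalProjectionOnto_eq_of_mem_left]
  simp_rw [hproj]
  rw [sum_comm]
  simp_rw [b.sum_sq_norm_inner_left, Submodule.norm_coe, c.orthonormal.1]
  simp

theorem norm_starProjection_orthogonal_le_norm_sub {𝕜 E : Type*} [RCLike 𝕜]
    [NormedAddCommGroup E] [InnerProductSpace 𝕜 E] (K : Submodule 𝕜 E) [Kᗮ.HasOrthogonalProjection]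
    (x : E) {v : E} (hv : v ∈ K) :
    ‖Kᗮ.starProjection x‖ ≤ ‖x - v‖ := by
  simpa [Submodule.starProjection_orthogonal_apply_eq_zero (K := K) hv] using
    Kᗮ.norm_starProjection_apply_le (x - v)

lemma rank_eq_finrank_range_toEuclideanLin {𝕜 l o : Type*} [RCLike 𝕜] [Fintype l] [Fintype o]
    [DecidableEq o] (B : Matrix l o 𝕜) :
    B.rank = Module.finrank 𝕜 (LinearMap.range (toEuclideanLin B)) := by
  rw [toEuclideanLin_eq_toLin_orthonormal]
  exact rank_eq_finrank_range_toLin _ _ _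

lemma toLp_col_mem_range_toEuclideanLin {𝕜 l o : Type*} [RCLike 𝕜] [Fintype o] [DecidableEq o]
    (B : Matrix l o 𝕜) (j : o) :
    WithLp.toLp 2 (B.col j) ∈ LinearMap.range (toEuclideanLin B) :=
  ⟨EuclideanSpace.single j 1, by simp [toLpLin_apply]⟩

/-- `ℕ`-indexed like `rdiag`, hence `0` when `n ≤ j`. -/
def stdVec (n j : ℕ) : EuclideanSpace ℝ (Fin n) :=
  WithLp.toLp 2 fun i => if (i : ℕ) = j then 1 else 0

lemma stdVec_val {n : ℕ} (i : Fin n) : stdVec n i = EuclideanSpace.single i 1 := by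
  ext i'
  simp [stdVec, Fin.val_inj]

lemma norm_stdVec_sq (n j : ℕ) : ‖stdVec n j‖ ^ 2 = if j < n then 1 else 0 := by
  split_ifs with hj
  · rw [← Fin.val_mk hj, stdVec_val]
    simp
  · have hzero : (fun i : Fin n => if (i : ℕ) = j then (1 : ℝ) else 0) = 0 := by
      ext i; simp only [Pi.zero_apply, ite_eq_right_iff, one_ne_zero, imp_false]; omega
    simp [stdVec, hzero]

lemma sum_range_norm_sq_starProjection_stdVec {n : ℕ}
    (K : Submodule ℝ (EuclideanSpace ℝ (Fin n))) :
    ∑ j ∈ range n, ‖K.starProjection (stdVec n j)‖ ^ 2 = Module.finrank ℝ K := by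
  rw [← Fin.sum_univ_eq_sum_range (fun j => ‖K.starProjection (stdVec n j)‖ ^ 2)]
  simpa [stdVec_val] using (EuclideanSpace.basisFun (Fin n) ℝ).sum_norm_sq_starProjection K

section

variable {n m : ℕ}

lemma frobSq_eq_sum_norm_sq_col (M : Matrix (Fin n) (Fin m) ℝ) :
    frobSq M = ∑ j, ‖WithLp.toLp 2 (M.col j)‖ ^ 2 := by
  simp_rw [EuclideanSpace.real_norm_sq_eq, frobSq]
  exact sum_comm

lemma frobSq_eq_trace (M : Matrix (Fin n) (Fin m) ℝ) : frobSq M = (Mᵀ * M).trace := by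
  simp only [frobSq, trace, diag_apply, mul_apply, transpose_apply, sq]
  exact sum_comm

lemma frobSq_mul_mul_transpose {U : Matrix (Fin n) (Fin n) ℝ}
    {V : Matrix (Fin m) (Fin m) ℝ} (hU : Uᵀ * U = 1) (hV : Vᵀ * V = 1)
    (M : Matrix (Fin n) (Fin m) ℝ) : frobSq (U * M * Vᵀ) = frobSq M := by
  have hconj : (U * M * Vᵀ)ᵀ * (U * M * Vᵀ) = V * (Mᵀ * M) * Vᵀ := by
    simp only [transpose_mul, transpose_transpose, Matrix.mul_assoc]
    rw [← Matrix.mul_assoc Uᵀ, hU, Matrix.one_mul]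
  rw [frobSq_eq_trace, frobSq_eq_trace, hconj, trace_mul_cycle, hV, Matrix.one_mul]

lemma toLp_col_rdiag (σ : ℕ → ℝ) (j : Fin m) :
    WithLp.toLp 2 ((rdiag n m σ).col j) = σ j • stdVec n j := by
  ext i
  simp only [rdiag, col_apply, of_apply, stdVec, PiLp.smul_apply, smul_eq_mul, mul_ite, mul_one,
    mul_zero]
  split_ifs with h <;> simp [h]

lemma frobSq_rdiag (σ : ℕ → ℝ) :
    frobSq (rdiag n m σ) = ∑ i ∈ range (min n m), σ i ^ 2 := by
  simp_rw [frobSq_eq_sum_norm_sq_col, toLp_col_rdiag, norm_smul, mul_pow, norm_stdVec_sq,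
    Real.norm_eq_abs, sq_abs, mul_ite, mul_one, mul_zero]
  rw [Fin.sum_univ_eq_sum_range (fun j => if j < n then σ j ^ 2 else 0), ← sum_filter]
  congr 1; ext; simp only [mem_filter, mem_range, lt_inf_iff]; omega

lemma rdiag_sub_rdiagTrunc (k : ℕ) (σ : ℕ → ℝ) :
    rdiag n m σ - rdiagTrunc n m k σ = rdiag n m fun i => if k ≤ i then σ i else 0 := by
  ext i j
  simp only [rdiag, rdiagTrunc, Matrix.sub_apply, of_apply]
  split_ifs <;> grind

lemma sq_mul_norm_sq_starProjection_le_norm_sq_col (σ : ℕ → ℝ)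
    (B : Matrix (Fin n) (Fin m) ℝ) (j : Fin m) :
    σ j ^ 2 * ‖(LinearMap.range (toEuclideanLin B))ᗮ.starProjection (stdVec n j)‖ ^ 2
      ≤ ‖WithLp.toLp 2 ((rdiag n m σ - B).col j)‖ ^ 2 := by
  have hcol : WithLp.toLp 2 ((rdiag n m σ - B).col j)
      = σ j • stdVec n j - WithLp.toLp 2 (B.col j) := by
    rw [← toLp_col_rdiag]; rfl
  rw [hcol, ← sq_abs (σ j), ← Real.norm_eq_abs, ← mul_pow, ← norm_smul, ← map_smul]
  gcongr
  exact norm_starProjection_orthogonal_le_norm_sub _ _ (toLp_col_mem_range_toEuclideanLin B j)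

lemma frobSq_rdiag_sub_rdiagTrunc (k : ℕ) (σ : ℕ → ℝ) :
    frobSq (rdiag n m σ - rdiagTrunc n m k σ) = ∑ i ∈ Ico k (min n m), σ i ^ 2 := by
  simp_rw [rdiag_sub_rdiagTrunc, frobSq_rdiag, ite_pow, zero_pow two_ne_zero]
  rw [← sum_filter]
  congr 1; ext; simp only [mem_filter, mem_range, lt_inf_iff, mem_Ico]; omega

theorem sum_Ico_sq_le_frobSq_rdiag_sub {k : ℕ} {σ : ℕ → ℝ} (hσ : Antitone fun i => σ i ^ 2)
    {B : Matrix (Fin n) (Fin m) ℝ} (hB : B.rank ≤ k) :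
    ∑ i ∈ Ico k (min n m), σ i ^ 2 ≤ frobSq (rdiag n m σ - B) := by
  set W := LinearMap.range (toEuclideanLin B)
  set w : ℕ → ℝ := fun j => ‖W.starProjection (stdVec n j)‖ ^ 2
  have hw1 : ∀ j, w j ≤ 1 := fun j =>
    (pow_le_pow_left₀ (norm_nonneg _) (W.norm_starProjection_apply_le _) 2).trans
      (by rw [norm_stdVec_sq]; split_ifs <;> norm_num)
  have hw : ∑ j ∈ range (min n m), w j ≤ k := calc
    _ ≤ ∑ j ∈ range n, w j := sum_le_sum_of_subset_of_nonneg
        (range_subset_range.2 (min_le_left _ _)) fun _ _ _ => sq_nonneg _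
    _ = Module.finrank ℝ W := sum_range_norm_sq_starProjection_stdVec W
    _ ≤ k := by rw [← rank_eq_finrank_range_toEuclideanLin]; exact_mod_cast hB
  have hdist : ∀ j < n, ‖Wᗮ.starProjection (stdVec n j)‖ ^ 2 = 1 - w j := fun j hj => by
    have := W.norm_sq_eq_add_norm_sq_starProjection (stdVec n j)
    rw [norm_stdVec_sq, if_pos hj] at this
    linarith
  calc ∑ i ∈ Ico k (min n m), σ i ^ 2
      ≤ ∑ j ∈ range (min n m), σ j ^ 2 * (1 - w j) :=
        sum_Ico_le_sum_mul_one_sub hσ (sq_nonneg _) (fun _ => sq_nonneg _) hw1 hw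
    _ = ∑ j ∈ range (min n m), σ j ^ 2 * ‖Wᗮ.starProjection (stdVec n j)‖ ^ 2 :=
        sum_congr rfl fun j hj => by
          rw [hdist j ((mem_range.1 hj).trans_le (min_le_left _ _))]
    _ ≤ ∑ j ∈ range m, σ j ^ 2 * ‖Wᗮ.starProjection (stdVec n j)‖ ^ 2 :=
        sum_le_sum_of_subset_of_nonneg (range_subset_range.2 (min_le_right _ _))
          fun _ _ _ => by positivity
    _ = ∑ j : Fin m, σ j ^ 2 * ‖Wᗮ.starProjection (stdVec n j)‖ ^ 2 :=
        (Fin.sum_univ_eq_sum_range (fun j => σ j ^ 2 * ‖Wᗮ.starProjection (stdVec n j)‖ ^ 2) m).symm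
    _ ≤ frobSq (rdiag n m σ - B) := by
        rw [frobSq_eq_sum_norm_sq_col]
        exact sum_le_sum fun j _ => sq_mul_norm_sq_starProjection_le_norm_sq_col σ B j

end

/-- Eckart–Young–Mirsky, Frobenius norm: for the rank-`k` SVD
truncation `A_k = U (Σ truncated to k) Vᵀ`, one has
`‖A − A_k‖_F² = Σ_{i > k} σᵢ²`, and `‖A − B‖_F ≥ ‖A − A_k‖_F` for every `B`
of rank at most `k`. -/
theorem eckart_young_mirsky_frobenius {n m k : ℕ}
    (A : Matrix (Fin n) (Fin m) ℝ)
    (U : Matrix (Fin n) (Fin n) ℝ) (V : Matrix (Fin m) (Fin m) ℝ) (σ : ℕ → ℝ)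
    (hSVD : IsSVDecomp A U V σ)
    (Ak : Matrix (Fin n) (Fin m) ℝ) (hAk : Ak = U * rdiagTrunc n m k σ * Vᵀ) :
    frobSq (A - Ak) = ∑ i ∈ Finset.Ico k (min n m), σ i ^ 2 ∧
    ∀ B : Matrix (Fin n) (Fin m) ℝ, B.rank ≤ k → frob (A - Ak) ≤ frob (A - B) := by
  obtain ⟨hUUt, hUtU, hVVt, hVtV, hσ0, hσ, -, rfl⟩ := hSVD
  have htail : frobSq (U * rdiag n m σ * Vᵀ - Ak) = ∑ i ∈ Ico k (min n m), σ i ^ 2 := by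
    rw [hAk, ← Matrix.sub_mul, ← Matrix.mul_sub, frobSq_mul_mul_transpose hUtU hVtV,
      frobSq_rdiag_sub_rdiagTrunc]
  refine ⟨htail, fun B hB => Real.sqrt_le_sqrt ?_⟩
  have hB_conj : B = U * (Uᵀ * B * V) * Vᵀ := by
    rw [← Matrix.mul_assoc, ← Matrix.mul_assoc, hUUt, Matrix.one_mul, Matrix.mul_assoc, hVVt,
      Matrix.mul_one]
  have hσ_sq : Antitone fun i => σ i ^ 2 := fun i j hij => pow_le_pow_left₀ (hσ0 j) (hσ i j hij) 2
  rw [htail, hB_conj, ← Matrix.sub_mul, ← Matrix.mul_sub, frobSq_mul_mul_transpose hUtU hVtV]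
  exact sum_Ico_sq_le_frobSq_rdiag_sub hσ_sq
    (((rank_mul_le_left _ _).trans (rank_mul_le_right _ _)).trans hB)
end
end

section
/- Let X, Y be n×m real matrices, let Z = Y X† X, and let P_k = Σ_{i=1}^{k} uᵢ uᵢᵀ be the orthogonal projector onto the span of the first k left singular vectors of Z. Then M_k⋆ = P_k Y X† is a minimizer of ‖Y − M X‖_F over all n×n matrices M of rank at most k. -/
/-!
Write `Z = Y X† X`. Since `X† X` is the orthogonal projector onto the row space of `X`, the
residual `Y - Z` is orthogonal to every `M X`, so `‖Y - M X‖² = ‖Y - Z‖² + ‖Z - M X‖²`; as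
`M_k⋆ X = P_k Z`, the claim reduces to the Eckart–Young theorem for `Z`. Conjugating by the
singular vectors reduces that to a rectangular diagonal `Σ`. If `C` has rank at most `k` and `P`
is the orthogonal projector onto its column space, then
`‖Σ - C‖² ≥ ‖(1 - P) Σ‖² = ‖Σ‖² - ∑ᵢ Pᵢᵢ σᵢ²`, and since the weights `Pᵢᵢ` lie in `[0, 1]` and
sum to `trace P ≤ k`, the sum `∑ᵢ Pᵢᵢ σᵢ²` is at most `σ₀² + ⋯ + σ_{k-1}²`, which is what `P_k`
attains.
-/

open Matrix

noncomputable section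

open Finset

section StarProjection

variable {ι : Type*} [Fintype ι] {P : Matrix ι ι ℝ}

lemma IsStarProjection.transpose_eq (hP : IsStarProjection P) : Pᵀ = P := by
  rw [← conjTranspose_eq_transpose_of_trivial]
  exact hP.isSelfAdjoint

lemma IsStarProjection.diag_nonneg (hP : IsStarProjection P) (i : ι) : 0 ≤ P i i := by
  have hPP : Pᴴ * P = P := by
    rw [← star_eq_conjTranspose, hP.isSelfAdjoint, hP.isIdempotentElem.eq]
  exact hPP ▸ (posSemidef_conjTranspose_mul_self P).diag_nonneg

lemma IsStarProjection.diag_le_one [DecidableEq ι] (hP : IsStarProjection P) (i : ι) :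
    P i i ≤ 1 := by
  simpa using hP.one_sub.diag_nonneg i

end StarProjection

lemma exists_isStarProjection_mul_eq_self_trace_eq_rank {ι κ : Type*} [Fintype ι] [Fintype κ]
    [DecidableEq ι] [DecidableEq κ] (C : Matrix ι κ ℝ) :
    ∃ P : Matrix ι ι ℝ, IsStarProjection P ∧ P * C = C ∧ P.trace = C.rank := by
  set K := LinearMap.range (toEuclideanLin C)
  let e : (EuclideanSpace ℝ ι →L[ℝ] EuclideanSpace ℝ ι) ≃⋆ₐ[ℝ] Matrix ι ι ℝ :=
    toEuclideanCLM.symm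
  have hP : toEuclideanLin (e K.starProjection) = K.starProjection := by
    simp [e, ← coe_toEuclideanCLM_eq_toEuclideanLin]
  refine ⟨e K.starProjection, isStarProjection_starProjection.map e, ?_, ?_⟩
  · apply toEuclideanLin.injective
    ext x : 1
    rw [toLpLin_mul_same, LinearMap.comp_apply, hP]
    exact K.starProjection_eq_self_iff.mpr (LinearMap.mem_range_self _ x)
  · have hproj : LinearMap.IsProj K (K.starProjection : _ →ₗ[ℝ] _) :=
      ⟨K.starProjection_apply_mem, fun x hx => K.starProjection_eq_self_iff.mpr hx⟩
    rw [C.rank_eq_finrank_range_toLin (EuclideanSpace.basisFun ι ℝ).toBasis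
      (EuclideanSpace.basisFun κ ℝ).toBasis, ← toEuclideanLin_eq_toLin_orthonormal,
      ← hproj.trace, ← hP]
    exact (trace_toLin_eq _ (EuclideanSpace.basisFun ι ℝ).toBasis).symm

lemma sum_mul_le_sum_filter_val_lt {n k : ℕ} {t d : Fin n → ℝ} (ht0 : ∀ i, 0 ≤ t i)
    (ht1 : ∀ i, t i ≤ 1) (hsum : ∑ i, t i ≤ k) (hd : Antitone d) (hd0 : ∀ i, 0 ≤ d i) :
    ∑ i, t i * d i ≤ ∑ i with i.val < k, d i := by
  rcases lt_or_ge k n with hkn | hnk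
  · set c := d ⟨k, hkn⟩
    -- `c` separates the first `k` values of `d` from the others.
    have hpt : ∀ i, t i * d i ≤ c * t i + if i.val < k then d i - c else 0 := by
      intro i
      split_ifs with hik
      · nlinarith [hd (show i ≤ ⟨k, hkn⟩ from Fin.le_def.mpr hik.le), ht1 i]
      · nlinarith [hd (show ⟨k, hkn⟩ ≤ i from Fin.le_def.mpr (not_lt.mp hik)), ht0 i]
    have hcard : (#{i : Fin n | i.val < k} : ℝ) = k := by
      rw [Fin.card_filter_val_lt, min_eq_right hkn.le]
    calc ∑ i, t i * d i ≤ ∑ i, (c * t i + if i.val < k then d i - c else 0) :=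
          sum_le_sum fun i _ => hpt i
      _ = c * ∑ i, t i - c * k + ∑ i with i.val < k, d i := by
          rw [sum_add_distrib, ← mul_sum, ← sum_filter, sum_sub_distrib, sum_const,
            nsmul_eq_mul, hcard]
          ring
      _ ≤ ∑ i with i.val < k, d i := by nlinarith [hd0 ⟨k, hkn⟩]
  · rw [filter_true_of_mem fun i _ => i.isLt.trans_le hnk]
    exact sum_le_sum fun i _ => mul_le_of_le_one_left (hd0 i) (ht1 i)

section FrobeniusSq

variable {n m : ℕ}

lemma frobSq_eq_trace_mul_transpose (A : Matrix (Fin n) (Fin m) ℝ) :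
    frobSq A = (A * Aᵀ).trace := by
  simp [frobSq, trace, mul_apply, sq]

lemma frobSq_nonneg (A : Matrix (Fin n) (Fin m) ℝ) : 0 ≤ frobSq A :=
  sum_nonneg fun _ _ => sum_nonneg fun _ _ => sq_nonneg _

lemma frobSq_add_of_mul_transpose_eq_zero {A B : Matrix (Fin n) (Fin m) ℝ} (h : A * Bᵀ = 0) :
    frobSq (A + B) = frobSq A + frobSq B := by
  have h' : B * Aᵀ = 0 := by simpa using congrArg transpose h
  rw [frobSq_eq_trace_mul_transpose, frobSq_eq_trace_mul_transpose,
    frobSq_eq_trace_mul_transpose, transpose_add, Matrix.add_mul, Matrix.mul_add, Matrix.mul_add,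
    h, h', add_zero, zero_add, trace_add]

lemma frobSq_orthogonal_mul {U : Matrix (Fin n) (Fin n) ℝ} (hU : Uᵀ * U = 1)
    (A : Matrix (Fin n) (Fin m) ℝ) : frobSq (U * A) = frobSq A := by
  rw [frobSq_eq_trace_mul_transpose, frobSq_eq_trace_mul_transpose, transpose_mul,
    ← Matrix.mul_assoc, trace_mul_comm]
  simp only [← Matrix.mul_assoc, hU, Matrix.one_mul]

lemma frobSq_mul_orthogonal {V : Matrix (Fin m) (Fin m) ℝ} (hV : V * Vᵀ = 1)
    (A : Matrix (Fin n) (Fin m) ℝ) : frobSq (A * V) = frobSq A := by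
  rw [frobSq_eq_trace_mul_transpose, frobSq_eq_trace_mul_transpose, transpose_mul,
    Matrix.mul_assoc, ← Matrix.mul_assoc V, hV, Matrix.one_mul]

lemma IsStarProjection.frobSq_mul {P : Matrix (Fin n) (Fin n) ℝ} (hP : IsStarProjection P)
    (A : Matrix (Fin n) (Fin m) ℝ) : frobSq (P * A) = (P * (A * Aᵀ)).trace := by
  rw [frobSq_eq_trace_mul_transpose, transpose_mul, hP.transpose_eq, ← Matrix.mul_assoc,
    trace_mul_comm]
  simp only [← Matrix.mul_assoc, hP.isIdempotentElem.eq]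

lemma IsStarProjection.frobSq_mul_add_frobSq_one_sub_mul {P : Matrix (Fin n) (Fin n) ℝ}
    (hP : IsStarProjection P) (A : Matrix (Fin n) (Fin m) ℝ) :
    frobSq (P * A) + frobSq ((1 - P) * A) = frobSq A := by
  rw [hP.frobSq_mul, hP.one_sub.frobSq_mul, ← trace_add, ← add_mul, add_sub_cancel,
    Matrix.one_mul, frobSq_eq_trace_mul_transpose]

end FrobeniusSq

section Diagonal

variable {n m k : ℕ} {σ : ℕ → ℝ}

lemma rdiag_mul_transpose (hσ : ∀ i, m ≤ i → σ i = 0) :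
    rdiag n m σ * (rdiag n m σ)ᵀ = diagonal fun i : Fin n => σ i ^ 2 := by
  ext i i'
  by_cases hi : i.val < m
  · rw [mul_apply, sum_eq_single ⟨i, hi⟩]
    · by_cases h : i = i' <;> simp [rdiag, diagonal, h, sq, Fin.val_eq_val, eq_comm]
    · intro j _ hj
      have hij : i.val ≠ j.val := fun h => hj (Fin.ext h.symm)
      simp [rdiag, hij]
    · simp
  · simp [mul_apply, rdiag, diagonal, hσ i (not_lt.mp hi)]

lemma dproj_eq_diagonal : dproj n k = diagonal fun i => if i.val < k then 1 else 0 := by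
  ext i j
  by_cases h : i = j <;> simp [dproj, diagonal, h]

lemma isStarProjection_dproj : IsStarProjection (dproj n k) := by
  rw [dproj_eq_diagonal]
  refine ⟨?_, ?_⟩
  · rw [IsIdempotentElem, diagonal_mul_diagonal]
    congr 1
    ext i
    split_ifs <;> norm_num
  · simp [IsSelfAdjoint, star_eq_conjTranspose]

lemma rank_dproj_le : (dproj n k).rank ≤ k := by
  rw [dproj_eq_diagonal, rank_diagonal]
  simp [Fintype.card_subtype, Fin.card_filter_val_lt]

lemma IsStarProjection.frobSq_mul_rdiag (hσ : ∀ i, m ≤ i → σ i = 0)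
    {P : Matrix (Fin n) (Fin n) ℝ} (hP : IsStarProjection P) :
    frobSq (P * rdiag n m σ) = ∑ i, P i i * σ i ^ 2 := by
  simp [hP.frobSq_mul, rdiag_mul_transpose hσ, trace, mul_diagonal]

end Diagonal

lemma frobSq_one_sub_dproj_mul_rdiag_le {n m k : ℕ} {σ : ℕ → ℝ} (hσ0 : ∀ i, 0 ≤ σ i)
    (hσ : Antitone σ) (hσm : ∀ i, m ≤ i → σ i = 0) {C : Matrix (Fin n) (Fin m) ℝ}
    (hC : C.rank ≤ k) :
    frobSq ((1 - dproj n k) * rdiag n m σ) ≤ frobSq (rdiag n m σ - C) := by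
  obtain ⟨P, hP, hPC, htr⟩ := exists_isStarProjection_mul_eq_self_trace_eq_rank C
  have hD := isStarProjection_dproj (n := n) (k := k)
  set S := rdiag n m σ
  have hweights : frobSq (P * S) ≤ frobSq (dproj n k * S) := by
    rw [hP.frobSq_mul_rdiag hσm, hD.frobSq_mul_rdiag hσm]
    simp only [dproj, of_apply, true_and, ite_mul, one_mul, zero_mul]
    rw [← sum_filter]
    refine sum_mul_le_sum_filter_val_lt hP.diag_nonneg hP.diag_le_one ?_
      (fun i j hij => pow_le_pow_left₀ (hσ0 _) (hσ hij) 2) (fun i => sq_nonneg _)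
    change P.trace ≤ k
    exact htr ▸ Nat.cast_le.mpr hC
  have hP1 : (1 - P) * (S - C) = (1 - P) * S := by
    rw [Matrix.mul_sub, Matrix.sub_mul 1 P C, Matrix.one_mul, hPC, sub_self, sub_zero]
  calc frobSq ((1 - dproj n k) * S) = frobSq S - frobSq (dproj n k * S) := by
        linarith [hD.frobSq_mul_add_frobSq_one_sub_mul S]
    _ ≤ frobSq S - frobSq (P * S) := sub_le_sub_left hweights _
    _ = frobSq ((1 - P) * (S - C)) := by
        linarith [hP1 ▸ hP.frobSq_mul_add_frobSq_one_sub_mul S]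
    _ ≤ frobSq (S - C) := by
        linarith [hP.frobSq_mul_add_frobSq_one_sub_mul (S - C), frobSq_nonneg (P * (S - C))]

lemma IsSVDecomp.frobSq_sub_mul_le {n m k : ℕ} {A : Matrix (Fin n) (Fin m) ℝ}
    {U : Matrix (Fin n) (Fin n) ℝ} {V : Matrix (Fin m) (Fin m) ℝ} {σ : ℕ → ℝ}
    (hA : IsSVDecomp A U V σ) {C : Matrix (Fin n) (Fin m) ℝ} (hC : C.rank ≤ k) :
    frobSq (A - U * dproj n k * Uᵀ * A) ≤ frobSq (A - C) := by
  obtain ⟨hUUt, hUtU, hVVt, hVtV, hσ0, hσ, hσz, rfl⟩ := hA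
  have hconj : ∀ B : Matrix (Fin n) (Fin m) ℝ, frobSq (U * B * Vᵀ) = frobSq B := fun B => by
    rw [frobSq_mul_orthogonal (by rwa [transpose_transpose]), frobSq_orthogonal_mul hUtU]
  set C' := Uᵀ * C * V
  have hC' : C'.rank ≤ k := ((rank_mul_le_left _ _).trans (rank_mul_le_right _ _)).trans hC
  have hCC' : C = U * C' * Vᵀ := by
    simp only [C', ← Matrix.mul_assoc, hUUt, Matrix.one_mul]
    rw [Matrix.mul_assoc, hVVt, Matrix.mul_one]
  have hL : U * rdiag n m σ * Vᵀ - U * dproj n k * Uᵀ * (U * rdiag n m σ * Vᵀ)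
      = U * ((1 - dproj n k) * rdiag n m σ) * Vᵀ := by
    rw [Matrix.sub_mul, Matrix.one_mul, Matrix.mul_sub, Matrix.sub_mul]
    simp only [Matrix.mul_assoc]
    rw [← Matrix.mul_assoc Uᵀ U, hUtU, Matrix.one_mul]
  rw [hL, hCC', ← Matrix.sub_mul, ← Matrix.mul_sub, hconj, hconj]
  exact frobSq_one_sub_dproj_mul_rdiag_le hσ0 hσ
    (fun i hi => hσz i ((min_le_right n m).trans hi)) hC'

lemma IsMoorePenrose.frobSq_sub_mul {n m : ℕ} {X : Matrix (Fin n) (Fin m) ℝ}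
    {Xd : Matrix (Fin m) (Fin n) ℝ} (hXd : IsMoorePenrose X Xd) (Y : Matrix (Fin n) (Fin m) ℝ)
    (N : Matrix (Fin n) (Fin n) ℝ) :
    frobSq (Y - N * X) = frobSq (Y - Y * Xd * X) + frobSq (Y * Xd * X - N * X) := by
  obtain ⟨hXXdX, -, -, hXdX⟩ := hXd
  have hXt : Xd * X * Xᵀ = Xᵀ := by
    rw [← hXdX, ← transpose_mul, ← Matrix.mul_assoc, hXXdX]
  have hres : (Y - Y * Xd * X) * Xᵀ = 0 := by
    rw [Matrix.sub_mul, Matrix.mul_assoc Y, Matrix.mul_assoc Y, hXt, sub_self]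
  have horth : (Y - Y * Xd * X) * (Y * Xd * X - N * X)ᵀ = 0 := by
    rw [← Matrix.sub_mul, transpose_mul, ← Matrix.mul_assoc, hres, Matrix.zero_mul]
  rw [← frobSq_add_of_mul_transpose_eq_zero horth, sub_add_sub_cancel]

/-- with `Z = Y X† X` and `P_k = Σ_{i≤k} uᵢ uᵢᵀ` the projector onto the
first `k` left singular vectors of `Z`, the matrix `M_k⋆ = P_k Y X†` has rank at
most `k` and minimizes `‖Y − M X‖_F` over all `n×n` matrices of rank at most `k`. -/
theorem projected_solution_is_minimizer {n m k : ℕ}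
    (X Y : Matrix (Fin n) (Fin m) ℝ) (Xd : Matrix (Fin m) (Fin n) ℝ)
    (hXd : IsMoorePenrose X Xd)
    (Uz : Matrix (Fin n) (Fin n) ℝ) (Vz : Matrix (Fin m) (Fin m) ℝ) (σ : ℕ → ℝ)
    (hSVD : IsSVDecomp (Y * Xd * X) Uz Vz σ)
    (Pk : Matrix (Fin n) (Fin n) ℝ) (hPk : Pk = Uz * dproj n k * Uzᵀ)
    (Mk : Matrix (Fin n) (Fin n) ℝ) (hMk : Mk = Pk * Y * Xd) :
    Mk.rank ≤ k ∧
    ∀ M : Matrix (Fin n) (Fin n) ℝ, M.rank ≤ k →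
      frob (Y - Mk * X) ≤ frob (Y - M * X) := by
  subst hPk hMk
  refine ⟨?_, fun M hM => Real.sqrt_le_sqrt ?_⟩
  · rw [Matrix.mul_assoc, Matrix.mul_assoc]
    exact (rank_mul_le_left _ _).trans ((rank_mul_le_right _ _).trans rank_dproj_le)
  · have hMkX : Uz * dproj n k * Uzᵀ * Y * Xd * X = Uz * dproj n k * Uzᵀ * (Y * Xd * X) := by
      simp only [Matrix.mul_assoc]
    rw [hXd.frobSq_sub_mul Y M, hXd.frobSq_sub_mul Y, hMkX]
    gcongr
    exact hSVD.frobSq_sub_mul_le ((rank_mul_le_left _ _).trans hM)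
end
end

section
/- For a Hilbert–Schmidt operator Y : U → V and an orthogonal projection Q : U → U of corank structure given by I − X† X for compact X : U → V, the error term expands as ‖Y ∘ (I − X† X)‖_HS² = Σ_{ℓ > rank(X)} Σᵢ (σᵢ^Y ⟨ψᵢ^Y, ψ_ℓ^X⟩)², where ψ_ℓ^X are the right singular vectors of X and (σᵢ^Y, ψᵢ^Y) are the singular values and right singular vectors of Y. -/
/-!
Orthonormality of `ψ^X` and of `φ^X` gives `X ψ_ℓ^X = σ_ℓ^X φ_ℓ^X` and, when `σ_ℓ^X > 0`,
`X† φ_ℓ^X = (σ_ℓ^X)⁻¹ ψ_ℓ^X`, so `X† X` fixes `ψ_ℓ^X` for `ℓ < r` and kills it for `ℓ ≥ r`.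
Hence only the terms `‖Y ψ_ℓ^X‖²` with `ℓ ≥ r` survive, and Parseval for the orthonormal
family `φ^Y` gives `‖Y u‖² = Σᵢ (σᵢ^Y ⟨ψᵢ^Y, u⟩)²`.
-/

open scoped InnerProductSpace

namespace Orthonormal

variable {ι 𝕜 E F : Type*} [RCLike 𝕜] [NormedAddCommGroup E] [InnerProductSpace 𝕜 E]
  [AddCommGroup F] [Module 𝕜 F] [TopologicalSpace F] {v : ι → E}

theorem tsum_smul_inner_smul_eq (hv : Orthonormal 𝕜 v) (c : ι → 𝕜) (w : ι → F) (j : ι) :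
    ∑' i, c i • (⟪v i, v j⟫_𝕜 • w i) = c j • w j := by
  classical
  rw [tsum_eq_single j fun i hi => by simp [orthonormal_iff_ite.mp hv, hi],
    orthonormal_iff_ite.mp hv, if_pos rfl, one_smul]

theorem norm_tsum_smul_sq [CompleteSpace E] (hv : Orthonormal 𝕜 v) (c : ι → 𝕜) :
    ‖∑' i, c i • v i‖ ^ 2 = ∑' i, ‖c i‖ ^ 2 := by
  by_cases hs : Summable fun i => c i • v i
  · have hfin (s : Finset ι) : ‖∑ i ∈ s, c i • v i‖ ^ 2 = ∑ i ∈ s, ‖c i‖ ^ 2 := by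
      rw [← RCLike.ofReal_inj (K := 𝕜)]
      push_cast
      rw [← inner_self_eq_norm_sq_to_K, hv.inner_sum]
      simp [RCLike.conj_mul]
    have hsum : HasSum (fun i => ‖c i‖ ^ 2) (‖∑' i, c i • v i‖ ^ 2) :=
      (hs.hasSum.norm.pow 2).congr hfin
    exact hsum.tsum_eq.symm
  · have hs' : ¬ Summable fun i => ‖c i‖ ^ 2 := fun h =>
      hs (by simpa using (hv.orthogonalFamily.summable_iff_norm_sq_summable c).mpr h)
    rw [tsum_eq_zero_of_not_summable hs, tsum_eq_zero_of_not_summable hs']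
    simp

end Orthonormal

theorem error_term_expansion_general {U V : Type*}
    [NormedAddCommGroup U] [InnerProductSpace ℝ U]
    [NormedAddCommGroup V] [InnerProductSpace ℝ V] [CompleteSpace V]
    (X Y : U →L[ℝ] V)
    (φX φY : ℕ → V) (ψX ψY : ℕ → U) (σX σY : ℕ → ℝ)
    (hφX : Orthonormal ℝ φX) (hφY : Orthonormal ℝ φY)
    (hψX : Orthonormal ℝ ψX)
    (hX : ∀ u, X u = ∑' i, σX i • ((inner ℝ (ψX i) u : ℝ) • φX i))
    (hY : ∀ u, Y u = ∑' i, σY i • ((inner ℝ (ψY i) u : ℝ) • φY i))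
    (e : HilbertBasis ℕ ℝ U) (he : ∀ i, e i = ψX i)
    (Xd : V →L[ℝ] U)
    (hXd : ∀ v, Xd v =
      ∑' i, (if 0 < σX i then (σX i)⁻¹ else 0) • ((inner ℝ (φX i) v : ℝ) • ψX i))
    (r : ℕ) (hrpos : ∀ i, i < r → 0 < σX i) (hrzero : ∀ i, r ≤ i → σX i = 0) :
    ∑' ℓ, ‖Y (e ℓ) - Y (Xd (X (e ℓ)))‖ ^ 2 =
      ∑' ℓ : {ℓ : ℕ // r ≤ ℓ}, ∑' i, (σY i * (inner ℝ (ψY i) (ψX (ℓ : ℕ)) : ℝ)) ^ 2 := by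
  have hXψ (ℓ : ℕ) : X (ψX ℓ) = σX ℓ • φX ℓ := by
    rw [hX, hψX.tsum_smul_inner_smul_eq]
  have hXdφ (ℓ : ℕ) : Xd (φX ℓ) = (if 0 < σX ℓ then (σX ℓ)⁻¹ else 0) • ψX ℓ := by
    rw [hXd, hφX.tsum_smul_inner_smul_eq]
  have hresidual (ℓ : ℕ) :
      Y (e ℓ) - Y (Xd (X (e ℓ))) = if ℓ < r then 0 else Y (ψX ℓ) := by
    rw [he, hXψ]
    split_ifs with h
    · rw [map_smul, hXdφ, if_pos (hrpos ℓ h), smul_smul, mul_inv_cancel₀ (hrpos ℓ h).ne',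
        one_smul, sub_self]
    · simp [hrzero ℓ (not_lt.mp h)]
  have hYnorm (u : U) : ‖Y u‖ ^ 2 = ∑' i, (σY i * ⟪ψY i, u⟫_ℝ) ^ 2 := by
    simp_rw [hY, smul_smul, hφY.norm_tsum_smul_sq, Real.norm_eq_abs, sq_abs]
  calc ∑' ℓ, ‖Y (e ℓ) - Y (Xd (X (e ℓ)))‖ ^ 2
      = ∑' ℓ : {ℓ : ℕ // r ≤ ℓ}, ‖Y (e ℓ) - Y (Xd (X (e ℓ)))‖ ^ 2 :=
        (tsum_subtype_eq_of_support_subset (s := {ℓ | r ≤ ℓ}) fun ℓ hℓ => not_lt.mp fun h =>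
          hℓ (by rw [hresidual, if_pos h, norm_zero, zero_pow two_ne_zero])).symm
    _ = _ := tsum_congr fun ℓ => by rw [hresidual, if_neg (not_lt.mpr ℓ.2), hYnorm]

/-- for Hilbert–Schmidt operators `X, Y : U → V` with SVDs
`X = Σᵢ σᵢ^X φᵢ^X ⟨ψᵢ^X, ·⟩`, `Y = Σᵢ σᵢ^Y φᵢ^Y ⟨ψᵢ^Y, ·⟩`, where the right
singular vectors `ψ^X` form an orthonormal basis of `U`, the error term expands as
`‖Y ∘ (I − X† X)‖_HS² = Σ_{ℓ ≥ rank X} Σᵢ (σᵢ^Y ⟨ψᵢ^Y, ψ_ℓ^X⟩)²`. -/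
theorem error_term_expansion {U V : Type*}
    [NormedAddCommGroup U] [InnerProductSpace ℝ U] [CompleteSpace U]
    [NormedAddCommGroup V] [InnerProductSpace ℝ V] [CompleteSpace V]
    (X Y : U →L[ℝ] V) (hcX : IsCompactOperator X) (hcY : IsCompactOperator Y)
    (φX φY : ℕ → V) (ψX ψY : ℕ → U) (σX σY : ℕ → ℝ)
    (hφX : Orthonormal ℝ φX) (hφY : Orthonormal ℝ φY)
    (hψX : Orthonormal ℝ ψX) (hψY : Orthonormal ℝ ψY)
    (hσX : ∀ i, 0 ≤ σX i) (hσY : ∀ i, 0 ≤ σY i)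
    (hX : ∀ u, X u = ∑' i, σX i • ((inner ℝ (ψX i) u : ℝ) • φX i))
    (hY : ∀ u, Y u = ∑' i, σY i • ((inner ℝ (ψY i) u : ℝ) • φY i))
    (e : HilbertBasis ℕ ℝ U) (he : ∀ i, e i = ψX i)
    (hYHS : Summable fun i => ‖Y (e i)‖ ^ 2)
    (Xd : V →L[ℝ] U)
    (hXd : ∀ v, Xd v =
      ∑' i, (if 0 < σX i then (σX i)⁻¹ else 0) • ((inner ℝ (φX i) v : ℝ) • ψX i))
    (r : ℕ) (hrpos : ∀ i, i < r → 0 < σX i) (hrzero : ∀ i, r ≤ i → σX i = 0) :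
    ∑' ℓ, ‖Y (e ℓ) - Y (Xd (X (e ℓ)))‖ ^ 2 =
      ∑' ℓ : {ℓ : ℕ // r ≤ ℓ}, ∑' i, (σY i * (inner ℝ (ψY i) (ψX (ℓ : ℕ)) : ℝ)) ^ 2 :=
  error_term_expansion_general X Y φX φY ψX ψY σX σY hφX hφY hψX hX hY e he Xd hXd r hrpos hrzero
end
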